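/- arXiv:1203.4126 — 3 statements merged into one kernel-verified Lean document; each statement's English description precedes it below -/
import Mathlib

section
/- Let (a_n)_{n∈ℕ} be any sequence of pairwise distinct integers. Then for Lebesgue-almost every real number x, the sequence (a_n x)_{n∈ℕ} is uniformly distributed modulo one. -/
open MeasureTheory Filter
open scoped Classical

def UnifDistModOne (u : ℕ → ℝ) : Prop :=
  ∀ a b : ℝ, 0 ≤ a → a ≤ b → b ≤ 1 →
    Filter.Tendsto
      (fun n : ℕ =>
        (((Finset.range n).filter (fun j => Int.fract (u j) ∈ Set.Icc a b)).card : ℝ) / n)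
      Filter.atTop (nhds (b - a))

/-!
Weyl's criterion: the continuous test functions `g` on the circle whose averages
`N⁻¹ ∑_{j<N} g (u j)` converge to `∫ g` form a closed subspace, so it is everything once it
contains the characters `e(h ·)`, `h ≠ 0`. Thickened indicators bound the proportion of points in
a closed arc from above; applied to `[a, b]` and to the complementary arc this pins it down.

For `u j = a j * x` the exponential sums `S_N = ∑_{j<N} e(h a_j x)` have `∫ |S_N|² = N` by
orthogonality, the frequencies `h a_j` being distinct. Hence `∑ₙ ∫ |S_{n²} / n²|² = ∑ₙ 1 / n²` is
finite and `S_{n²} / n² → 0` almost everywhere; as `|S_{N+1} - S_N| ≤ 1`, the gaps between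
consecutive squares are too short to matter, and `S_N / N → 0` for almost every `x`.
-/

open Finset Topology AddCircle

noncomputable def empiricalMean {X E : Type*} [AddCommMonoid E] [Module ℝ E] (z : ℕ → X)
    (g : X → E) (N : ℕ) : E :=
  (N : ℝ)⁻¹ • ∑ j ∈ range N, g (z j)

section EmpiricalMean

variable {X E : Type*} (z : ℕ → X)

section Algebra

variable [AddCommGroup E] [Module ℝ E]

lemma empiricalMean_zero : empiricalMean z (0 : X → E) = 0 := by
  ext N
  simp [empiricalMean]

lemma empiricalMean_add (g h : X → E) :
    empiricalMean z (g + h) = empiricalMean z g + empiricalMean z h := by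
  ext N
  simp only [empiricalMean, Pi.add_apply, sum_add_distrib, smul_add]

lemma empiricalMean_sub (g h : X → E) :
    empiricalMean z (g - h) = empiricalMean z g - empiricalMean z h := by
  ext N
  simp only [empiricalMean, Pi.sub_apply, sum_sub_distrib, smul_sub]

lemma empiricalMean_smul {𝕜 : Type*} [DistribSMul 𝕜 E] [SMulCommClass ℝ 𝕜 E] (c : 𝕜)
    (g : X → E) : empiricalMean z (c • g) = c • empiricalMean z g := by
  ext N
  rw [empiricalMean, Pi.smul_apply, empiricalMean]
  simp only [Pi.smul_apply, ← smul_sum]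
  exact smul_comm _ _ _

lemma empiricalMean_const_of_ne_zero (c : E) {N : ℕ} (hN : N ≠ 0) :
    empiricalMean z (fun _ => c) N = c := by
  rw [empiricalMean, sum_const, card_range, ← Nat.cast_smul_eq_nsmul ℝ, smul_smul,
    inv_mul_cancel₀ (Nat.cast_ne_zero.2 hN), one_smul]

end Algebra

lemma norm_empiricalMean_le [SeminormedAddCommGroup E] [NormedSpace ℝ E] {g : X → E} {C : ℝ}
    (hC : 0 ≤ C) (hg : ∀ x, ‖g x‖ ≤ C) (N : ℕ) : ‖empiricalMean z g N‖ ≤ C := by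
  rcases N.eq_zero_or_pos with rfl | hN
  · simpa [empiricalMean] using hC
  calc ‖empiricalMean z g N‖ ≤ (N : ℝ)⁻¹ * ∑ j ∈ range N, ‖g (z j)‖ := by
        rw [empiricalMean, norm_smul, Real.norm_of_nonneg (by positivity)]
        gcongr
        exact norm_sum_le _ _
    _ ≤ (N : ℝ)⁻¹ * (N * C) := by
        gcongr
        simpa using sum_le_sum fun j (_ : j ∈ range N) => hg (z j)
    _ = C := by field_simp

lemma lipschitzWith_empiricalMean [TopologicalSpace X] [CompactSpace X] (N : ℕ) :
    LipschitzWith 1 fun g : C(X, ℂ) => empiricalMean z g N :=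
  LipschitzWith.of_dist_le_mul fun g h => by
    rw [NNReal.coe_one, one_mul, dist_eq_norm, dist_eq_norm, ← Pi.sub_apply, ← empiricalMean_sub,
      ← ContinuousMap.coe_sub]
    exact norm_empiricalMean_le z (norm_nonneg _) (ContinuousMap.norm_coe_le_norm _) N

end EmpiricalMean

section ContinuousTestFunctions

variable {X : Type*} [TopologicalSpace X] [CompactSpace X] [MeasurableSpace X]
  [OpensMeasurableSpace X] (z : ℕ → X) (μ : Measure X) [IsFiniteMeasure μ]

lemma ContinuousMap.integrable_of_compactSpace (g : C(X, ℂ)) : Integrable g μ :=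
  g.continuous.integrable_of_hasCompactSupport (HasCompactSupport.of_compactSpace _)

lemma continuous_integral_continuousMap : Continuous fun g : C(X, ℂ) => ∫ x, g x ∂μ :=
  LipschitzWith.continuous (K := (μ Set.univ).toNNReal) <|
    LipschitzWith.of_dist_le_mul fun g h => by
    rw [dist_eq_norm, dist_eq_norm, ← integral_sub (g.integrable_of_compactSpace μ)
      (h.integrable_of_compactSpace μ), ENNReal.coe_toNNReal_eq_toReal, mul_comm]
    exact norm_integral_le_of_norm_le_const
      (Eventually.of_forall fun x => (g - h).norm_coe_le_norm x)

noncomputable def convergentMeansSubmodule : Submodule ℂ C(X, ℂ) where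
  carrier := {g | Tendsto (empiricalMean z g) atTop (𝓝 (∫ x, g x ∂μ))}
  zero_mem' := by
    change Tendsto _ _ _
    rw [ContinuousMap.coe_zero, empiricalMean_zero, Pi.zero_def]
    simp
  add_mem' {g h} hg hh := by
    change Tendsto _ _ _
    rw [ContinuousMap.coe_add, empiricalMean_add, integral_add' (g.integrable_of_compactSpace μ)
      (h.integrable_of_compactSpace μ)]
    exact hg.add hh
  smul_mem' c g hg := by
    change Tendsto _ _ _
    rw [ContinuousMap.coe_smul, empiricalMean_smul]
    simp only [Pi.smul_apply, integral_smul]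
    exact hg.const_smul c

lemma isClosed_convergentMeansSubmodule :
    IsClosed (convergentMeansSubmodule z μ : Set C(X, ℂ)) :=
  (LipschitzWith.uniformEquicontinuous _ 1 (lipschitzWith_empiricalMean z)).equicontinuous
    |>.isClosed_setOfPred_tendsto (continuous_integral_continuousMap μ)

end ContinuousTestFunctions

section Fourier

variable {T : ℝ} [Fact (0 < T)]

lemma integral_fourier (m : ℤ) :
    ∫ z, fourier m z ∂(haarAddCircle : Measure (AddCircle T)) = if m = 0 then 1 else 0 := by
  simpa [fourierCoeff, Pi.single_apply, eq_comm] using congr_fun (fourierCoeff_fourier (T := T) m) 0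

lemma tendsto_empiricalMean_of_tendsto_fourier {z : ℕ → AddCircle T}
    (hz : ∀ m ≠ 0, Tendsto (empiricalMean z (fourier m)) atTop (𝓝 0)) (g : C(AddCircle T, ℂ)) :
    Tendsto (empiricalMean z g) atTop (𝓝 (∫ x, g x ∂haarAddCircle)) := by
  have hfourier :
      Submodule.span ℂ (Set.range fourier) ≤ convergentMeansSubmodule z haarAddCircle := by
    refine Submodule.span_le.2 (Set.range_subset_iff.2 fun m => ?_)
    change Tendsto _ _ _
    rw [integral_fourier]
    split_ifs with hm
    · subst hm
      refine tendsto_const_nhds.congr' ((eventually_ne_atTop 0).mono fun N hN => ?_)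
      have h0 : ⇑(fourier 0 : C(AddCircle T, ℂ)) = fun _ => 1 := funext fun _ => fourier_zero
      rw [h0, empiricalMean_const_of_ne_zero z 1 hN]
    · exact hz m hm
  have := Submodule.topologicalClosure_minimal _ hfourier (isClosed_convergentMeansSubmodule z _)
  rw [span_fourier_closure_eq_top] at this
  exact this Submodule.mem_top

end Fourier

section ClosedSets

variable {X : Type*} [PseudoEMetricSpace X] [MeasurableSpace X] [OpensMeasurableSpace X]
  {μ : Measure X} [IsFiniteMeasure μ] {z : ℕ → X}

lemma eventually_card_filter_mem_div_lt
    (hz : ∀ f : C(X, ℝ), Tendsto (empiricalMean z f) atTop (𝓝 (∫ x, f x ∂μ)))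
    {F : Set X} (hF : IsClosed F) {r : ℝ} (hr : μ.real F < r) :
    ∀ᶠ N in atTop, (#{j ∈ range N | z j ∈ F} : ℝ) / N < r := by
  have hδ (n : ℕ) : (0 : ℝ) < 1 / (n + 1) := Nat.one_div_pos_of_nat
  obtain ⟨n, hn⟩ := ((tendsto_integral_thickenedIndicator_of_isClosed μ hF hδ
    tendsto_one_div_add_atTop_nhds_zero_nat).eventually_lt_const hr).exists
  let f : C(X, ℝ) := ⟨fun x => thickenedIndicator (hδ n) F x, by fun_prop⟩
  filter_upwards [(hz f).eventually_lt_const hn] with N hN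
  refine lt_of_le_of_lt ?_ hN
  rw [empiricalMean, smul_eq_mul, div_eq_inv_mul, card_eq_sum_ones, Nat.cast_sum, sum_filter]
  gcongr with j
  split_ifs with hj
  · simpa [f] using one_le_thickenedIndicator_apply X (hδ n) hj
  · exact NNReal.coe_nonneg _

end ClosedSets

lemma UnitAddCircle.haarAddCircle_eq_volume :
    (haarAddCircle : Measure UnitAddCircle) = volume := by
  simp [volume_eq_smul_haarAddCircle]

lemma UnitAddCircle.isClosed_coe_image_Icc (p q : ℝ) :
    IsClosed (((↑) : ℝ → UnitAddCircle) '' Set.Icc p q) :=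
  (isCompact_Icc.image (AddCircle.continuous_mk' 1)).isClosed

lemma haarAddCircle_coe_image_Icc_le (p q : ℝ) :
    haarAddCircle (((↑) : ℝ → UnitAddCircle) '' Set.Icc p q) ≤ ENNReal.ofReal (q - p) := by
  have hF := (UnitAddCircle.isClosed_coe_image_Icc p q).measurableSet
  rw [← Real.volume_Icc, UnitAddCircle.haarAddCircle_eq_volume,
    ← (AddCircle.measurePreserving_mk 1 (q - 1)).measure_preimage hF.nullMeasurableSet,
    Measure.restrict_apply (AddCircle.measurable_mk' hF)]
  -- A point of `(q - 1, q]` is `y + k` with `y ∈ [p, q]` and `k ∈ ℤ`, forcing `k ≥ 0`.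
  refine measure_mono fun x ⟨⟨y, hy, hyx⟩, hx⟩ => ?_
  obtain ⟨k, hk⟩ := AddSubgroup.mem_zmultiples_iff.1 (QuotientAddGroup.eq.1 hyx)
  rw [zsmul_one] at hk
  have : (-1 : ℝ) < k := by linarith [hx.1, hy.2]
  have hk0 : (0 : ℝ) ≤ k := by exact_mod_cast (show (-1 : ℤ) < k by exact_mod_cast this)
  exact ⟨by linarith [hy.1], by linarith [hx.2]⟩

lemma coe_mem_image_Icc_of_fract_add_mem {x p q : ℝ} (k : ℤ) (h : Int.fract x + k ∈ Set.Icc p q) :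
    (x : UnitAddCircle) ∈ ((↑) : ℝ → UnitAddCircle) '' Set.Icc p q :=
  ⟨_, h, QuotientAddGroup.eq.2 (AddSubgroup.mem_zmultiples_iff.2 ⟨⌊x⌋ - k, by
    rw [zsmul_one, Int.fract]; push_cast; ring⟩)⟩

lemma coe_mem_image_Icc_of_fract_notMem {x a b : ℝ} (ha : 0 ≤ a) (hb : b ≤ 1)
    (h : Int.fract x ∉ Set.Icc a b) :
    (x : UnitAddCircle) ∈ ((↑) : ℝ → UnitAddCircle) '' Set.Icc b (a + 1) := by
  rw [Set.mem_Icc, not_and_or, not_le, not_le] at h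
  have h0 := Int.fract_nonneg x
  have h1 := Int.fract_lt_one x
  rcases h with h | h
  · exact coe_mem_image_Icc_of_fract_add_mem 1 ⟨by push_cast; linarith, by push_cast; linarith⟩
  · exact coe_mem_image_Icc_of_fract_add_mem 0 ⟨by push_cast; linarith, by push_cast; linarith⟩

lemma unifDistModOne_of_tendsto_empiricalMean {u : ℕ → ℝ}
    (hu : ∀ f : C(UnitAddCircle, ℝ), Tendsto (empiricalMean (fun j => (u j : UnitAddCircle)) f)
      atTop (𝓝 (∫ x, f x ∂haarAddCircle))) :
    UnifDistModOne u := by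
  intro a b ha hab hb
  have hmeasure {p q : ℝ} (hpq : p ≤ q) :
      (haarAddCircle : Measure UnitAddCircle).real ((↑) '' Set.Icc p q) ≤ q - p :=
    ENNReal.toReal_le_of_le_ofReal (by linarith) (haarAddCircle_coe_image_Icc_le p q)
  refine tendsto_order.2 ⟨fun r hr => ?_, fun r hr => ?_⟩
  -- The points outside `[a, b]` lie in the closed arc `[b, a + 1]` of length `1 - (b - a)`.
  · filter_upwards [eventually_card_filter_mem_div_lt hu
      (UnitAddCircle.isClosed_coe_image_Icc b (a + 1)) (r := 1 - r)
      (by linarith [hmeasure (show b ≤ a + 1 by linarith)]), eventually_ne_atTop 0] with N hN hN0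
    have hsplit := card_filter_add_card_filter_not (s := range N)
      (fun j => Int.fract (u j) ∈ Set.Icc a b)
    have hle := card_le_card (monotone_filter_right (range N) fun j _ =>
      coe_mem_image_Icc_of_fract_notMem (x := u j) ha hb)
    rw [card_range] at hsplit
    have hNpos : (0 : ℝ) < N := by positivity
    rw [div_lt_iff₀ hNpos] at hN
    rw [lt_div_iff₀ hNpos]
    have hsplit' := congrArg (Nat.cast (R := ℝ)) hsplit
    push_cast at hsplit'
    have hle' := Nat.cast_le (α := ℝ) |>.2 hle
    linarith
  · filter_upwards [eventually_card_filter_mem_div_lt hu (UnitAddCircle.isClosed_coe_image_Icc a b)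
      (hmeasure hab |>.trans_lt hr)] with N hN
    refine lt_of_le_of_lt ?_ hN
    gcongr with j
    exact fun hj => coe_mem_image_Icc_of_fract_add_mem 0 (by simpa using hj)

lemma unifDistModOne_of_tendsto_fourier {u : ℕ → ℝ}
    (hu : ∀ m ≠ 0, Tendsto (empiricalMean (fun j => (u j : UnitAddCircle)) (fourier m)) atTop
      (𝓝 0)) :
    UnifDistModOne u := by
  refine unifDistModOne_of_tendsto_empiricalMean fun f => ?_
  have hC := tendsto_empiricalMean_of_tendsto_fourier hu ⟨fun x => (f x : ℂ), by fun_prop⟩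
  have hmean : empiricalMean (fun j => (u j : UnitAddCircle)) (fun x => (f x : ℂ)) =
      fun N => ((empiricalMean (fun j => (u j : UnitAddCircle)) f N : ℝ) : ℂ) := by
    ext N
    simp [empiricalMean]
  rw [ContinuousMap.coe_mk, hmean, integral_complex_ofReal] at hC
  simpa [Function.comp_def] using (Complex.continuous_re.tendsto _).comp hC

lemma tendsto_norm_div_of_tendsto_norm_sq_div {E : Type*} [SeminormedAddCommGroup E] {s : ℕ → E}
    (hs : ∀ N, ‖s (N + 1) - s N‖ ≤ 1)
    (h : Tendsto (fun n : ℕ => ‖s (n ^ 2)‖ / (n ^ 2 : ℕ)) atTop (𝓝 0)) :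
    Tendsto (fun N : ℕ => ‖s N‖ / N) atTop (𝓝 0) := by
  have hbound {N : ℕ} (hN : N ≠ 0) :
      ‖s N‖ / N ≤ ‖s (N.sqrt ^ 2)‖ / (N.sqrt ^ 2 : ℕ) + 2 / N.sqrt := by
    set m := N.sqrt
    have hm : (0 : ℝ) < m := Nat.cast_pos.2 (Nat.sqrt_pos.2 (Nat.pos_of_ne_zero hN))
    have hle : m ^ 2 ≤ N := Nat.sqrt_le' N
    have hgap : (N : ℝ) ≤ m ^ 2 + 2 * m := by
      have := Nat.lt_succ_sqrt' N
      exact_mod_cast (by nlinarith : N ≤ m ^ 2 + 2 * m)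
    have hstep : ‖s N - s (m ^ 2)‖ ≤ N - m ^ 2 := by
      have := dist_le_Ico_sum_of_dist_le (f := s) hle (d := fun _ => 1) fun _ _ => by
        rw [dist_comm, dist_eq_norm]; exact hs _
      simpa [dist_eq_norm', Nat.cast_sub hle] using this
    have hmN : (m : ℝ) ^ 2 ≤ N := by exact_mod_cast hle
    calc ‖s N‖ / N ≤ (‖s (m ^ 2)‖ + (N - m ^ 2)) / N := by
          gcongr
          linarith [norm_le_insert' (s N) (s (m ^ 2))]
      _ = ‖s (m ^ 2)‖ / N + (N - m ^ 2) / N := add_div _ _ _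
      _ ≤ ‖s (m ^ 2)‖ / (m ^ 2 : ℕ) + 2 * m / m ^ 2 := by
          have h1 : ‖s (m ^ 2)‖ / N ≤ ‖s (m ^ 2)‖ / (m ^ 2 : ℝ) := by gcongr
          have h2 : ((N : ℝ) - m ^ 2) / N ≤ 2 * m / m ^ 2 := by
            rw [div_le_div_iff₀ (by positivity) (by positivity)]
            nlinarith
          push_cast
          linarith
      _ = ‖s (m ^ 2)‖ / (m ^ 2 : ℕ) + 2 / m := by field_simp
  have hsqrt : Tendsto Nat.sqrt atTop atTop :=
    tendsto_atTop_atTop.2 fun b => ⟨b * b, fun n hn => Nat.le_sqrt.2 hn⟩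
  have hlim := (h.add (tendsto_const_div_atTop_nhds_zero_nat 2)).comp hsqrt
  rw [add_zero] at hlim
  exact squeeze_zero' (Eventually.of_forall fun N => by positivity)
    ((eventually_ne_atTop 0).mono fun N hN => hbound hN) hlim

lemma ae_tendsto_zero_of_summable_integral {α : Type*} [MeasurableSpace α] {μ : Measure α}
    {f : ℕ → α → ℝ} (hf : ∀ n, Integrable (f n) μ) (hnonneg : ∀ n, 0 ≤ᵐ[μ] f n)
    (hsum : Summable fun n => ∫ x, f n x ∂μ) :
    ∀ᵐ x ∂μ, Tendsto (f · x) atTop (𝓝 0) := by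
  have hL1 (n : ℕ) : eLpNorm (f n) 1 μ = ENNReal.ofReal (∫ x, f n x ∂μ) := by
    rw [eLpNorm_one_eq_lintegral_enorm, ofReal_integral_eq_lintegral_ofReal (hf n) (hnonneg n)]
    refine lintegral_congr_ae ((hnonneg n).mono fun x hx => ?_)
    exact Real.enorm_of_nonneg hx
  have hfinite : ∑' n, eLpNorm (f n) 1 μ ≠ ⊤ := by
    simp_rw [hL1]
    rw [← ENNReal.ofReal_tsum_of_nonneg (fun n => integral_nonneg_of_ae (hnonneg n)) hsum]
    exact ENNReal.ofReal_ne_top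
  filter_upwards [summable_norm_of_tsum_eLpNorm_ne_top le_rfl
    (fun n => (hf n).aestronglyMeasurable) hfinite] with x hx
  exact tendsto_zero_iff_norm_tendsto_zero.2 hx.tendsto_atTop_zero

section FourierSums

variable {T : ℝ} [Fact (0 < T)]

lemma integral_norm_sq_sum_fourier {ι : Type*} (s : Finset ι) {c : ι → ℤ} (hc : Set.InjOn c s) :
    ∫ z, ‖∑ j ∈ s, fourier (c j) z‖ ^ 2 ∂(haarAddCircle : Measure (AddCircle T)) = #s := by
  have hexpand (z : AddCircle T) : ((‖∑ j ∈ s, fourier (c j) z‖ ^ 2 : ℝ) : ℂ) =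
      ∑ j ∈ s, ∑ k ∈ s, fourier (c j - c k) z := by
    rw [Complex.ofReal_pow, ← Complex.mul_conj', map_sum, sum_mul_sum]
    refine sum_congr rfl fun j _ => sum_congr rfl fun k _ => ?_
    rw [← fourier_neg, ← fourier_add, sub_eq_add_neg]
  have hdiag {j : ι} (hj : j ∈ s) :
      ∑ k ∈ s, ∫ z, fourier (c j - c k) z ∂(haarAddCircle : Measure (AddCircle T)) = 1 := by
    simp_rw [integral_fourier, sub_eq_zero]
    calc ∑ k ∈ s, (if c j = c k then (1 : ℂ) else 0) = ∑ k ∈ s, if j = k then 1 else 0 :=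
          sum_congr rfl fun k hk => by simp only [hc.eq_iff hj hk]
      _ = 1 := by rw [sum_ite_eq, if_pos hj]
  apply Complex.ofReal_injective
  rw [← integral_complex_ofReal]
  simp_rw [hexpand]
  rw [integral_finsetSum _ fun j _ => integrable_finsetSum _ fun k _ =>
    (fourier _).integrable_of_compactSpace _]
  simp_rw [integral_finsetSum _ fun k _ => (fourier _).integrable_of_compactSpace _]
  rw [sum_congr rfl fun j hj => hdiag hj]
  simp

lemma ae_tendsto_empiricalMean_fourier {c : ℕ → ℤ} (hc : Function.Injective c) :
    ∀ᵐ z ∂(haarAddCircle : Measure (AddCircle T)),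
      Tendsto (empiricalMean c fun m => fourier m z) atTop (𝓝 0) := by
  set S : ℕ → AddCircle T → ℂ := fun N z => ∑ j ∈ range N, fourier (c j) z
  have hS (N : ℕ) : Continuous (S N) := continuous_finsetSum _ fun j _ => (fourier (c j)).continuous
  have hsq : ∀ᵐ z ∂(haarAddCircle : Measure (AddCircle T)),
      Tendsto (fun n : ℕ => (‖S (n ^ 2) z‖ / (n ^ 2 : ℕ)) ^ 2) atTop (𝓝 0) := by
    refine ae_tendsto_zero_of_summable_integral
      (fun n => ((hS _).norm.div_const _).pow 2 |>.integrable_of_hasCompactSupport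
        (HasCompactSupport.of_compactSpace _))
      (fun n => ae_of_all _ fun z => by positivity) ?_
    have hL2 (n : ℕ) :
        ∫ z, (‖S (n ^ 2) z‖ / (n ^ 2 : ℕ)) ^ 2 ∂(haarAddCircle : Measure (AddCircle T)) =
          1 / (n : ℝ) ^ 2 := by
      simp_rw [div_pow]
      rw [integral_div, integral_norm_sq_sum_fourier _ hc.injOn, card_range]
      rcases eq_or_ne n 0 with rfl | hn
      · simp
      · push_cast
        field_simp
    simpa only [hL2] using Real.summable_one_div_nat_pow.2 one_lt_two
  filter_upwards [hsq] with z hz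
  have hstep (N : ℕ) : ‖S (N + 1) z - S N z‖ ≤ 1 := by
    simpa [S, sum_range_succ] using (fourier (c N)).norm_coe_le_norm z |>.trans (fourier_norm _).le
  have hroot : Tendsto (fun n : ℕ => ‖S (n ^ 2) z‖ / (n ^ 2 : ℕ)) atTop (𝓝 0) := by
    have := hz.sqrt
    rw [Real.sqrt_zero] at this
    exact this.congr fun n => Real.sqrt_sq (by positivity)
  rw [tendsto_zero_iff_norm_tendsto_zero]
  refine (tendsto_norm_div_of_tendsto_norm_sq_div (s := (S · z)) hstep hroot).congr fun N => ?_
  rw [empiricalMean, norm_smul, norm_inv, Real.norm_natCast, inv_mul_eq_div]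

end FourierSums

lemma UnitAddCircle.ae_coe_of_ae {p : UnitAddCircle → Prop} (h : ∀ᵐ z ∂haarAddCircle, p z) :
    ∀ᵐ x : ℝ, p x := by
  rw [UnitAddCircle.haarAddCircle_eq_volume] at h
  rw [← Measure.restrict_univ (μ := volume), ← iUnion_Ioc_intCast ℝ,
    ae_restrict_iUnion_iff (fun k : ℤ => Set.Ioc (k : ℝ) (k + 1))]
  exact fun k => (AddCircle.measurePreserving_mk 1 k).quasiMeasurePreserving.ae h

lemma empiricalMean_fourier_coe_intCast_mul (a : ℕ → ℤ) (h : ℤ) (x : ℝ) :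
    empiricalMean (fun j => ((a j * x : ℝ) : UnitAddCircle)) (fourier h) =
      empiricalMean (fun j => h * a j) fun m => fourier m (x : UnitAddCircle) := by
  ext N
  simp only [empiricalMean, fourier_coe_apply]
  push_cast
  ring_nf

/-- Weyl: for any sequence of pairwise distinct integers `a`, for Lebesgue-almost
every real `x`, the sequence `(a n * x)` is uniformly distributed modulo one. -/
theorem weyl_theorem (a : ℕ → ℤ) (ha : Function.Injective a) :
    ∀ᵐ x ∂(volume : Measure ℝ), UnifDistModOne (fun n => (a n : ℝ) * x) := by
  have hfourier (h : ℤ) (hh : h ≠ 0) : ∀ᵐ x : ℝ,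
      Tendsto (empiricalMean (fun j => ((a j * x : ℝ) : UnitAddCircle)) (fourier h)) atTop
        (𝓝 0) := by
    simpa only [empiricalMean_fourier_coe_intCast_mul] using UnitAddCircle.ae_coe_of_ae
      (ae_tendsto_empiricalMean_fourier (c := fun j => h * a j) ((mul_right_injective₀ hh).comp ha))
  filter_upwards [ae_all_iff.2 fun h => eventually_imp_distrib_left.2 (hfourier h)] with x hx
  exact unifDistModOne_of_tendsto_fourier hx
end

section
/- The set C is a closed subset of [0,1] of Lebesgue measure zero. -/
/-!
`C` is the image of the compact set of digit sequences `d` with `d (2^(2n) - 1) = d (2^(2n+1) - 1)`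
under the continuous map `d ↦ ∑ dᵢ 2^-(i+1)`, hence closed. For the measure, fix `M = 4^N`: the
first `M` digits contain `N` linked pairs, so at most `2^(M-N)` prefixes of length `M` occur, and
each prefix confines the point to an interval of length `2^-M`; thus `vol C ≤ 2^-N` for all `N`.
-/

open MeasureTheory Filter Finset Function
open scoped ENNReal

/-- `d : ℕ → Bool` is a binary expansion of `x`, where `d i` is the digit at
position `i + 1` (positions are indexed from 1). -/
def IsBinaryExpansion (x : ℝ) (d : ℕ → Bool) : Prop :=
  x = ∑' i : ℕ, if d i then ((2:ℝ) ^ (i + 1))⁻¹ else 0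

/-- The set `C` of `x ∈ [0,1]` having a binary expansion in which, for every `n`,
the digit at position `2^(2n)` equals the digit at position `2^(2n+1)`. -/
def Cset : Set ℝ :=
  {x ∈ Set.Icc (0:ℝ) 1 |
    ∃ d : ℕ → Bool, IsBinaryExpansion x d ∧
      ∀ n : ℕ, d (2 ^ (2 * n) - 1) = d (2 ^ (2 * n + 1) - 1)}

theorem card_filter_forall_apply_eq_le {κ ι β : Type*} [Fintype κ] [Fintype ι] [Fintype β]
    [DecidableEq ι] [DecidableEq β] (a b : κ → ι) (ha : Injective a) (hb : ∀ m n, b m ≠ a n) :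
    #{v : ι → β | ∀ n, v (a n) = v (b n)} ≤ Fintype.card β ^ (Fintype.card ι - Fintype.card κ) := by
  set A := univ.map ⟨a, ha⟩
  have hbA : ∀ n, b n ∉ A := by simpa [A] using fun n m ↦ (hb n m).symm
  -- An admissible `v` is determined off `A`, since `v (a n) = v (b n)` with `b n ∉ A`.
  have hinj : Set.InjOn (fun v : ι → β ↦ fun i : {i // i ∉ A} ↦ v i)
      (({v : ι → β | ∀ n, v (a n) = v (b n)} : Finset _) : Set (ι → β)) := by
    intro v hv w hw hvw
    simp only [coe_filter, mem_univ, true_and, Set.mem_ofPred_eq] at hv hw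
    funext i
    by_cases hi : i ∈ A
    · obtain ⟨n, -, rfl⟩ := mem_map.1 hi
      rw [Embedding.coeFn_mk, hv n, hw n]
      exact congrFun hvw ⟨b n, hbA n⟩
    · exact congrFun hvw ⟨i, hi⟩
  calc _ ≤ #(univ : Finset ({i // i ∉ A} → β)) :=
        card_le_card_of_injOn _ (fun _ _ ↦ mem_coe.2 (mem_univ _)) hinj
    _ = _ := by
        rw [card_univ, Fintype.card_fun, Fintype.card_subtype_compl, Fintype.card_coe, card_map,
          card_univ]

noncomputable def digitValue (b : Bool) (i : ℕ) : ℝ := if b then ((2:ℝ) ^ (i + 1))⁻¹ else 0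

noncomputable def binaryValue (d : ℕ → Bool) : ℝ := ∑' i, digitValue (d i) i

theorem digitValue_nonneg (b : Bool) (i : ℕ) : 0 ≤ digitValue b i := by
  unfold digitValue; split <;> positivity

theorem digitValue_le (b : Bool) (i : ℕ) : digitValue b i ≤ ((2:ℝ) ^ (i + 1))⁻¹ := by
  unfold digitValue; split
  · exact le_rfl
  · positivity

theorem digitValue_add (b : Bool) (i M : ℕ) :
    digitValue b (i + M) = ((2:ℝ) ^ M)⁻¹ * digitValue b i := by
  unfold digitValue; split <;> simp [pow_add, mul_comm, mul_assoc]

theorem summable_inv_two_pow_succ : Summable fun i : ℕ ↦ ((2:ℝ) ^ (i + 1))⁻¹ :=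
  (summable_geometric_two' 1).congr fun i ↦ by ring

theorem tsum_inv_two_pow_succ : ∑' i : ℕ, ((2:ℝ) ^ (i + 1))⁻¹ = 1 :=
  (tsum_congr fun i ↦ by ring).trans (tsum_geometric_two' 1)

theorem summable_digitValue (d : ℕ → Bool) : Summable fun i ↦ digitValue (d i) i :=
  .of_nonneg_of_le (fun i ↦ digitValue_nonneg _ i) (fun i ↦ digitValue_le _ i)
    summable_inv_two_pow_succ

theorem binaryValue_nonneg (d : ℕ → Bool) : 0 ≤ binaryValue d :=
  tsum_nonneg fun i ↦ digitValue_nonneg _ i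

theorem binaryValue_le_one (d : ℕ → Bool) : binaryValue d ≤ 1 :=
  tsum_inv_two_pow_succ ▸ (summable_digitValue d).tsum_le_tsum (fun i ↦ digitValue_le _ i)
    summable_inv_two_pow_succ

theorem continuous_binaryValue : Continuous binaryValue := by
  refine continuous_tsum (fun i ↦ ?_) summable_inv_two_pow_succ fun i d ↦ ?_
  · exact (continuous_of_discreteTopology (f := (digitValue · i))).comp (continuous_apply i)
  · rw [Real.norm_of_nonneg (digitValue_nonneg _ i)]
    exact digitValue_le _ i
theorem binaryValue_mem_Icc_prefix (d : ℕ → Bool) (M : ℕ) :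
    binaryValue d ∈ Set.Icc (∑ i : Fin M, digitValue (d i) i)
      ((∑ i : Fin M, digitValue (d i) i) + ((2:ℝ) ^ M)⁻¹) := by
  have htail : ∑' i, digitValue (d (i + M)) (i + M) =
      ((2:ℝ) ^ M)⁻¹ * binaryValue fun i ↦ d (i + M) := by
    simp only [digitValue_add, tsum_mul_left, binaryValue]
  rw [Fin.sum_univ_eq_sum_range (fun i ↦ digitValue (d i) i), binaryValue,
    ← (summable_digitValue d).sum_add_tsum_nat_add M, htail]
  have hM : (0:ℝ) ≤ ((2:ℝ) ^ M)⁻¹ := by positivity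
  exact ⟨le_add_of_nonneg_right (mul_nonneg hM (binaryValue_nonneg _)),
    add_le_add_right (mul_le_of_le_one_right hM (binaryValue_le_one _)) _⟩

theorem volume_image_binaryValue_le {K : Set (ℕ → Bool)} {M : ℕ} (P : Finset (Fin M → Bool))
    (hP : ∀ d ∈ K, (fun i : Fin M ↦ d i) ∈ P) :
    volume (binaryValue '' K) ≤ #P * ((2:ℝ≥0∞) ^ M)⁻¹ := by
  let prefixValue (v : Fin M → Bool) : ℝ := ∑ i, digitValue (v i) i
  have hcover : binaryValue '' K ⊆
      ⋃ v ∈ P, Set.Icc (prefixValue v) (prefixValue v + ((2:ℝ) ^ M)⁻¹) := by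
    rintro _ ⟨d, hd, rfl⟩
    exact Set.mem_biUnion (hP d hd) (binaryValue_mem_Icc_prefix d M)
  calc volume (binaryValue '' K)
      ≤ ∑ v ∈ P, volume (Set.Icc (prefixValue v) (prefixValue v + ((2:ℝ) ^ M)⁻¹)) :=
        (measure_mono hcover).trans (measure_biUnion_finset_le _ _)
    _ = #P * ((2:ℝ≥0∞) ^ M)⁻¹ := by
        simp [Real.volume_Icc, ENNReal.ofReal_inv_of_pos, ENNReal.ofReal_pow]

theorem ENNReal.pow_sub_mul_inv_pow {a : ℝ≥0∞} (ha₀ : a ≠ 0) (ha : a ≠ ⊤) {m n : ℕ} (h : n ≤ m) :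
    a ^ (m - n) * (a ^ m)⁻¹ = (a ^ n)⁻¹ := by
  obtain ⟨k, rfl⟩ := Nat.exists_eq_add_of_le' h
  rw [Nat.add_sub_cancel, pow_add, ENNReal.mul_inv (by simp [ha₀]) (by simp [ha]), ← mul_assoc,
    ENNReal.mul_inv_cancel (by simp [ha₀]) (by simp [ha]), one_mul]

def linkedDigits : Set (ℕ → Bool) :=
  {d | ∀ n : ℕ, d (2 ^ (2 * n) - 1) = d (2 ^ (2 * n + 1) - 1)}

theorem isClosed_linkedDigits : IsClosed linkedDigits := by
  simp only [linkedDigits, Set.ofPred_forall]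
  exact isClosed_iInter fun n ↦ isClosed_eq (continuous_apply _) (continuous_apply _)

theorem Cset_eq_image : Cset = binaryValue '' linkedDigits := by
  ext x
  constructor
  · rintro ⟨-, d, hd, hlink⟩
    exact ⟨d, hlink, hd.symm⟩
  · rintro ⟨d, hlink, rfl⟩
    exact ⟨⟨binaryValue_nonneg d, binaryValue_le_one d⟩, d, rfl, hlink⟩

theorem isClosed_Cset : IsClosed Cset := by
  rw [Cset_eq_image]
  exact (isClosed_linkedDigits.isCompact.image continuous_binaryValue).isClosed

theorem two_pow_sub_one_lt_two_pow {k m : ℕ} (h : k ≤ m) : 2 ^ k - 1 < 2 ^ m :=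
  Nat.sub_one_lt_of_le (Nat.two_pow_pos k) (Nat.pow_le_pow_right two_pos h)

theorem two_pow_sub_one_injective : Injective fun k : ℕ ↦ 2 ^ k - 1 := fun _ _ h ↦
  Nat.pow_right_injective le_rfl (Nat.sub_one_cancel (Nat.two_pow_pos _) (Nat.two_pow_pos _) h)

theorem volume_Cset_le (N : ℕ) : volume Cset ≤ 2⁻¹ ^ N := by
  set M := 2 ^ (2 * N)
  -- Among the first `M` digits, the digit at (0-indexed) position `a n` is a copy of the one at `b n`.
  let a (n : Fin N) : Fin M := ⟨2 ^ (2 * n.1 + 1) - 1, two_pow_sub_one_lt_two_pow (by omega)⟩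
  let b (n : Fin N) : Fin M := ⟨2 ^ (2 * n.1) - 1, two_pow_sub_one_lt_two_pow (by omega)⟩
  have ha : Injective a := fun m n h ↦ by
    have := two_pow_sub_one_injective (Fin.mk.inj_iff.1 h)
    omega
  have hb : ∀ m n, b m ≠ a n := fun m n h ↦ by
    have := two_pow_sub_one_injective (Fin.mk.inj_iff.1 h)
    omega
  have hNM : N ≤ M := (Nat.lt_two_pow_self).le.trans (Nat.pow_le_pow_right two_pos (by omega))
  have hcard := card_filter_forall_apply_eq_le (β := Bool) a b ha hb
  simp only [Fintype.card_bool, Fintype.card_fin] at hcard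
  rw [Cset_eq_image, ← ENNReal.inv_pow,
    ← ENNReal.pow_sub_mul_inv_pow two_ne_zero ENNReal.ofNat_ne_top hNM]
  refine (volume_image_binaryValue_le {v | ∀ n, v (a n) = v (b n)} fun d hd ↦ ?_).trans ?_
  · simpa using fun n : Fin N ↦ (hd n).symm
  · gcongr
    norm_cast
    convert hcard

/-- The set `C` is a closed subset of `[0,1]` of Lebesgue measure zero. -/
theorem Cset_closed_subset_null :
    Cset ⊆ Set.Icc (0:ℝ) 1 ∧ IsClosed Cset ∧ volume Cset = 0 :=
  ⟨fun _ hx ↦ hx.1, isClosed_Cset, nonpos_iff_eq_zero.1 <| ge_of_tendsto'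
    (ENNReal.tendsto_pow_atTop_nhds_zero_of_lt_one (by norm_num)) volume_Cset_le⟩
end

section
/- Let b > 1 be an integer, let x ∈ [0,1], and let (a_n)_{n∈ℕ} be a sequence of pairwise distinct nonnegative integers such that the sequence (b^{a_n} x)_{n∈ℕ} is uniformly distributed modulo one. Then for every k ≥ 1 and every string w of k digits from {0,…,b−1}, the limiting frequency with which w occurs in the base-b expansion of x starting at the positions a_0+1, a_1+1, a_2+1, … equals b^{-k}; that is, lim_{N→∞} (1/N)·|{n < N : the digits of the base-b expansion of x at positions a_n+1, …, a_n+k form the string w}| = b^{-k}. -/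
open MeasureTheory Filter
open scoped Classical

/-- The digit at position `p` (positions indexed from 1) of the base-`b` expansion of `x`:
`⌊b^p x⌋ mod b`. -/
noncomputable def baseDigit (b : ℕ) (x : ℝ) (p : ℕ) : ℤ := ⌊(b : ℝ) ^ p * x⌋ % b

/-!
The digits of `x` at positions `m + 1, …, m + k` are the digits of `frac (b^m x)` at positions
`1, …, k`, and a number `y ∈ [0,1)` has the digits `w₀ … w_{k-1}` there exactly when it lies in the
`b`-adic interval `[0.w₀…w_{k-1}, 0.w₀…w_{k-1} + b^{-k})`. Uniform distribution of `b^{a n} x`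
modulo one gives this interval the asymptotic frequency `b^{-k}`; being half-open, it is the
difference of two of the closed intervals in the definition.
-/

open Finset

lemma UnifDistModOne.tendsto_card_filter_Ico_div {u : ℕ → ℝ} (hu : UnifDistModOne u)
    {a c : ℝ} (ha : 0 ≤ a) (hac : a ≤ c) (hc : c ≤ 1) :
    Tendsto (fun n : ℕ =>
        (((range n).filter (fun j => Int.fract (u j) ∈ Set.Ico a c)).card : ℝ) / n)
      atTop (nhds (c - a)) := by
  have hsplit : ∀ n, ((range n).filter (fun j => Int.fract (u j) ∈ Set.Icc a c)).card =
      ((range n).filter (fun j => Int.fract (u j) ∈ Set.Ico a c)).card +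
        ((range n).filter (fun j => Int.fract (u j) ∈ Set.Icc c c)).card := by
    intro n
    rw [← card_union_of_disjoint, ← filter_or]
    · congr 1
      refine filter_congr fun j _ => ?_
      rw [← Set.Ico_insert_right hac, Set.Icc_self, Set.mem_insert_iff, Set.mem_singleton_iff,
        or_comm]
    · exact disjoint_filter.2 fun j _ hIco hIcc => hIco.2.ne (le_antisymm hIco.2.le hIcc.1)
  have hlim := (hu a c ha hac hc).sub (hu c c (ha.trans hac) le_rfl hc)
  rw [sub_self, sub_zero] at hlim
  refine hlim.congr fun n => ?_
  rw [hsplit n]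
  push_cast
  ring

lemma Int.floor_eq_and_fract_mem_Ico_iff {z s t : ℝ} {d : ℤ} (hs : 0 ≤ s) (ht : t ≤ 1) :
    (⌊z⌋ = d ∧ Int.fract z ∈ Set.Ico s t) ↔ z ∈ Set.Ico (d + s) (d + t) := by
  have hz := Int.floor_add_fract z
  constructor
  · rintro ⟨rfl, hs', ht'⟩
    constructor <;> linarith
  · rintro ⟨hsz, hzt⟩
    have hfloor : ⌊z⌋ = d := Int.floor_eq_iff.2 ⟨by linarith, by linarith⟩
    refine ⟨hfloor, ?_, ?_⟩ <;> rw [Int.fract, hfloor] <;> linarith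

lemma baseDigit_add_succ (b : ℕ) (x : ℝ) (m p : ℕ) :
    baseDigit b x (m + (p + 1)) = baseDigit b (Int.fract ((b : ℝ) ^ m * x)) (p + 1) := by
  have hsplit : (b : ℝ) ^ (m + (p + 1)) * x = (b : ℝ) ^ (p + 1) * Int.fract ((b : ℝ) ^ m * x) +
      (((b : ℤ) * ((b : ℤ) ^ p * ⌊(b : ℝ) ^ m * x⌋) : ℤ) : ℝ) := by
    rw [Int.fract]
    push_cast
    ring
  rw [baseDigit, baseDigit, hsplit, Int.floor_add_intCast, Int.add_mul_emod_self_left]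

lemma baseDigit_one_of_mem_Ico {b : ℕ} (hb : 0 < b) {y : ℝ} (hy : y ∈ Set.Ico (0 : ℝ) 1) :
    baseDigit b y 1 = ⌊(b : ℝ) * y⌋ := by
  have hbR : (0 : ℝ) < b := by exact_mod_cast hb
  rw [baseDigit, pow_one]
  refine Int.emod_eq_of_lt (Int.floor_nonneg.2 (by nlinarith [hy.1])) (Int.floor_lt.2 ?_)
  push_cast
  nlinarith [hy.2]

noncomputable def blockStart (b : ℕ) {k : ℕ} (w : Fin k → ℤ) : ℝ :=
  ∑ i : Fin k, (w i : ℝ) / (b : ℝ) ^ ((i : ℕ) + 1)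

lemma blockStart_succ (b : ℕ) {k : ℕ} (w : Fin (k + 1) → ℤ) :
    blockStart b w = (w 0 + blockStart b (fun i : Fin k => w i.succ)) / b := by
  rw [blockStart, blockStart, Fin.sum_univ_succ, add_div, sum_div]
  congr 1
  · simp
  · refine sum_congr rfl fun i _ => ?_
    rw [Fin.val_succ, pow_succ' _ ((i : ℕ) + 1), div_div, mul_comm]

lemma blockStart_nonneg_and_add_le_one {b : ℕ} (hb : 0 < b) {k : ℕ} (w : Fin k → ℤ)
    (hw : ∀ i, 0 ≤ w i ∧ w i < b) :
    0 ≤ blockStart b w ∧ blockStart b w + 1 / (b : ℝ) ^ k ≤ 1 := by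
  induction k with
  | zero => simp [blockStart]
  | succ k ih =>
    obtain ⟨hs0, hs1⟩ := ih (fun i => w i.succ) fun i => hw i.succ
    have hbR : (0 : ℝ) < b := by exact_mod_cast hb
    have hw0 : (0 : ℝ) ≤ w 0 := by exact_mod_cast (hw 0).1
    have hw1 : (w 0 : ℝ) + 1 ≤ b := by exact_mod_cast (hw 0).2
    rw [blockStart_succ]
    refine ⟨by positivity, ?_⟩
    calc (w 0 + blockStart b (fun i : Fin k => w i.succ)) / b + 1 / (b : ℝ) ^ (k + 1)
        = (w 0 + (blockStart b (fun i : Fin k => w i.succ) + 1 / (b : ℝ) ^ k)) / b := by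
          rw [pow_succ']; field_simp; ring
      _ ≤ (w 0 + 1) / b := by gcongr
      _ ≤ 1 := (div_le_one hbR).2 hw1

theorem baseDigit_block_eq_iff_mem_Ico {b : ℕ} (hb : 0 < b) {k : ℕ} (w : Fin k → ℤ)
    (hw : ∀ i, 0 ≤ w i ∧ w i < b) {y : ℝ} (hy : y ∈ Set.Ico (0 : ℝ) 1) :
    (∀ i : Fin k, baseDigit b y ((i : ℕ) + 1) = w i) ↔
      y ∈ Set.Ico (blockStart b w) (blockStart b w + 1 / (b : ℝ) ^ k) := by
  induction k generalizing y with
  | zero => simpa [blockStart] using hy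
  | succ k ih =>
    have hbR : (0 : ℝ) < b := by exact_mod_cast hb
    obtain ⟨hs0, hs1⟩ := blockStart_nonneg_and_add_le_one hb (fun i : Fin k => w i.succ)
      fun i => hw i.succ
    have htail : ∀ i : Fin k, baseDigit b y ((i.succ : ℕ) + 1) =
        baseDigit b (Int.fract ((b : ℝ) * y)) ((i : ℕ) + 1) := fun i => by
      rw [Fin.val_succ, add_comm _ 1, baseDigit_add_succ, pow_one]
    rw [Fin.forall_fin_succ, Fin.val_zero, zero_add, baseDigit_one_of_mem_Ico hb hy]
    simp only [htail]
    rw [ih _ (fun i => hw i.succ) ⟨Int.fract_nonneg _, Int.fract_lt_one _⟩,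
      Int.floor_eq_and_fract_mem_Ico_iff hs0 hs1, blockStart_succ, pow_succ, ← div_div,
      ← add_div, add_assoc, Set.mem_Ico, Set.mem_Ico, div_le_iff₀ hbR, lt_div_iff₀ hbR,
      mul_comm y]

theorem block_frequency_along_sequence_general (b : ℕ) (hb : 1 < b) (x : ℝ)
    (a : ℕ → ℕ)
    (hud : UnifDistModOne (fun n => (b : ℝ) ^ (a n) * x)) :
    ∀ k : ℕ, 1 ≤ k → ∀ w : Fin k → ℤ, (∀ i, 0 ≤ w i ∧ w i < b) →
      Filter.Tendsto
        (fun N : ℕ =>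
          (((Finset.range N).filter
              (fun n => ∀ i : Fin k, baseDigit b x (a n + 1 + (i : ℕ)) = w i)).card : ℝ) / N)
        Filter.atTop (nhds (1 / (b : ℝ) ^ k)) := by
  intro k _ w hw
  have hb0 : 0 < b := by omega
  obtain ⟨hs0, hs1⟩ := blockStart_nonneg_and_add_le_one hb0 w hw
  have hblock : ∀ n, (∀ i : Fin k, baseDigit b x (a n + 1 + (i : ℕ)) = w i) ↔
      Int.fract ((b : ℝ) ^ a n * x) ∈
        Set.Ico (blockStart b w) (blockStart b w + 1 / (b : ℝ) ^ k) := fun n => by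
    rw [← baseDigit_block_eq_iff_mem_Ico hb0 w hw ⟨Int.fract_nonneg _, Int.fract_lt_one _⟩]
    refine forall_congr' fun i => ?_
    rw [add_assoc, add_comm 1, baseDigit_add_succ]
  have hlim := hud.tendsto_card_filter_Ico_div hs0 (le_add_of_nonneg_right (by positivity)) hs1
  rw [add_sub_cancel_left] at hlim
  simpa only [hblock] using hlim

/-- Let `b > 1`, `x ∈ [0,1]`, and let `(a n)` be a sequence of pairwise distinct
nonnegative integers such that `(b^{a n} x)` is uniformly distributed modulo one.  Then
for every `k ≥ 1` and every block `w` of `k` digits from `{0, …, b-1}`, the limiting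
frequency with which `w` occurs in the base-`b` expansion of `x` starting at positions
`a n + 1` equals `b^{-k}`. -/
theorem block_frequency_along_sequence (b : ℕ) (hb : 1 < b) (x : ℝ)
    (hx : x ∈ Set.Icc (0:ℝ) 1) (a : ℕ → ℕ) (ha : Function.Injective a)
    (hud : UnifDistModOne (fun n => (b : ℝ) ^ (a n) * x)) :
    ∀ k : ℕ, 1 ≤ k → ∀ w : Fin k → ℤ, (∀ i, 0 ≤ w i ∧ w i < b) →
      Filter.Tendsto
        (fun N : ℕ =>
          (((Finset.range N).filter
              (fun n => ∀ i : Fin k, baseDigit b x (a n + 1 + (i : ℕ)) = w i)).card : ℝ) / N)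
        Filter.atTop (nhds (1 / (b : ℝ) ^ k)) :=
  block_frequency_along_sequence_general b hb x a hud
end
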